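/- Let n ≥ 1 be an integer and let h : {0,1,…,n} → ℝ satisfy h(0) = 0, h(n) = 1, and n·h(k) = k·h(k+1) + (n−k)·h(k−1) for every integer k with 1 ≤ k ≤ n−1. Then for every integer i with 1 ≤ i ≤ n, h(i) − h(i−1) = (1/2)^(n−1) · C(n−1, i−1), where C(a,b) denotes the binomial coefficient. -/

import Mathlib

/-!
The recurrence says that the increments `d j = h (j + 1) - h j` satisfy
`(j + 1) d (j + 1) = (n - 1 - j) d j`, which is the ratio of consecutive binomial
coefficients `C(n - 1, j + 1) / C(n - 1, j)`. Hence `d j = d 0 · C(n - 1, j)`, and since the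
increments telescope to `h n - h 0 = 1` while the binomial coefficients sum to `2 ^ (n - 1)`,
`d 0 = (1 / 2) ^ (n - 1)`.
-/

theorem eq_mul_choose_of_succ_mul_eq {K : Type*} [Field K] [CharZero K] {m : ℕ} {d : ℕ → K}
    (hd : ∀ j < m, ((j : K) + 1) * d (j + 1) = ((m - j : ℕ) : K) * d j) :
    ∀ j ≤ m, d j = d 0 * m.choose j := by
  intro j hj
  induction j with
  | zero => simp
  | succ j ih =>
    have hjm : j < m := hj
    have hchoose : ((j : K) + 1) * m.choose (j + 1) = ((m - j : ℕ) : K) * m.choose j := by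
      rw [mul_comm ((m - j : ℕ) : K)]
      exact_mod_cast (mul_comm _ _).trans (Nat.choose_succ_right_eq m j)
    apply mul_left_cancel₀ (Nat.cast_add_one_ne_zero j)
    calc ((j : K) + 1) * d (j + 1) = ((m - j : ℕ) : K) * (d 0 * m.choose j) := by
          rw [hd j hjm, ih hjm.le]
      _ = ((j : K) + 1) * (d 0 * m.choose (j + 1)) := by
          rw [mul_left_comm, ← hchoose]; ring

theorem triadic_winner_distribution_general
    (n : ℕ) (h : ℕ → ℝ)
    (h0 : h 0 = 0) (hN : h n = 1)
    (hrec : ∀ k : ℕ, 1 ≤ k → k ≤ n - 1 →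
      (n : ℝ) * h k = (k : ℝ) * h (k + 1) + ((n : ℝ) - (k : ℝ)) * h (k - 1)) :
    ∀ i : ℕ, 1 ≤ i → i ≤ n →
      h i - h (i - 1) = (1 / 2 : ℝ) ^ (n - 1) * ((n - 1).choose (i - 1) : ℝ) := by
  obtain _ | m := n
  · simp [h0] at hN
  set d : ℕ → ℝ := fun j ↦ h (j + 1) - h j with hd_def
  have hd_rec : ∀ j < m, ((j : ℝ) + 1) * d (j + 1) = ((m - j : ℕ) : ℝ) * d j := by
    intro j hj
    have hrec_j := hrec (j + 1) (by omega) (by omega)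
    simp only [hd_def, Nat.cast_sub hj.le]
    push_cast at hrec_j ⊢
    linarith
  have hd_choose := eq_mul_choose_of_succ_mul_eq hd_rec
  have hd0 : d 0 * 2 ^ m = 1 := by
    calc d 0 * 2 ^ m = ∑ j ∈ Finset.range (m + 1), d 0 * m.choose j := by
          rw [← Finset.mul_sum, ← Nat.cast_sum, Nat.sum_range_choose]
          norm_num
      _ = ∑ j ∈ Finset.range (m + 1), d j :=
          Finset.sum_congr rfl fun j hj ↦ (hd_choose j (Finset.mem_range_succ_iff.mp hj)).symm
      _ = 1 := by rw [Finset.sum_range_sub, hN, h0, sub_zero]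
  rintro (_ | j) hj hjm
  · omega
  simpa [d, one_div, eq_inv_of_mul_eq_one_left hd0, inv_pow]
    using hd_choose j (by omega)

theorem triadic_winner_distribution
    (n : ℕ) (hn : 1 ≤ n) (h : ℕ → ℝ)
    (h0 : h 0 = 0) (hN : h n = 1)
    (hrec : ∀ k : ℕ, 1 ≤ k → k ≤ n - 1 →
      (n : ℝ) * h k = (k : ℝ) * h (k + 1) + ((n : ℝ) - (k : ℝ)) * h (k - 1)) :
    ∀ i : ℕ, 1 ≤ i → i ≤ n →
      h i - h (i - 1) = (1 / 2 : ℝ) ^ (n - 1) * ((n - 1).choose (i - 1) : ℝ) :=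
  triadic_winner_distribution_general n h h0 hN hrec
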